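/- Let d ≥ 2, let E1, E2 be transverse complete flags of ℂ^d, and let (w_i)_{i∈A} be a family of nonzero complex numbers. Then there exists c ∈ GL_d(ℂ) preserving both flags E1 and E2 such that, for all complete flags F and G with (E1,E2,F) and (E1,E2,G) in general position, the triple (E1,E2,c·G) is in general position and D^i(E1,E2,F,c·G) = w_i·D^i(E1,E2,F,G) for every i ∈ A. Moreover, any two elements of GL_d(ℂ) with these properties differ by multiplication by a nonzero scalar. -/

import Mathlib

noncomputable section

/-- A complete flag of `ℂ^d`: an increasing chain of subspaces `F 0 ⊆ F 1 ⊆ ⋯` of `ℂ^d`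
with `dim (F k) = k` for all `k ≤ d`. -/
def IsCompleteFlag (d : ℕ) (F : ℕ → Submodule ℂ (Fin d → ℂ)) : Prop :=
  Monotone F ∧ ∀ k, k ≤ d → Module.finrank ℂ ↥(F k) = k

/-- Two complete flags of `ℂ^d` are transverse: `F^k + G^(d-k) = ℂ^d` for all `k`. -/
def TransverseFlags (d : ℕ) (F G : ℕ → Submodule ℂ (Fin d → ℂ)) : Prop :=
  ∀ k, k ≤ d → F k ⊔ G (d - k) = ⊤

/-- The flag `g · F`, whose subspaces are the images `g (F k)`. -/
def flagMap (d : ℕ) (g : Matrix (Fin d) (Fin d) ℂ) (F : ℕ → Submodule ℂ (Fin d → ℂ)) :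
    ℕ → Submodule ℂ (Fin d → ℂ) :=
  fun k => Submodule.map g.mulVecLin (F k)

/-- A triple of flags of `ℂ^d` in general position:
`F1^k1 + F2^k2 + F3^k3 = ℂ^d` whenever `k1 + k2 + k3 = d`. -/
def GenPos3 (d : ℕ) (F1 F2 F3 : ℕ → Submodule ℂ (Fin d → ℂ)) : Prop :=
  ∀ k1 k2 k3 : ℕ, k1 + k2 + k3 = d → F1 k1 ⊔ F2 k2 ⊔ F3 k3 = ⊤

/-- The index set `B`: triples of positive integers summing to `d`. -/
def memB (d : ℕ) (j : ℕ × ℕ × ℕ) : Prop :=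
  0 < j.1 ∧ 0 < j.2.1 ∧ 0 < j.2.2 ∧ j.1 + j.2.1 + j.2.2 = d

/-- The index set `A`: pairs of positive integers summing to `d`. -/
def memA (d : ℕ) (i : ℕ × ℕ) : Prop :=
  0 < i.1 ∧ 0 < i.2 ∧ i.1 + i.2 = d

/-- `v 0, v 1, …, v (d-1)` is a basis adapted to the flag `F`: for every `k ≤ d`, the
subspace `F k` is spanned by the first `k` vectors.  A nonzero element `f^k` of the line
`⋀^k F^k` is then given by `v 0 ∧ ⋯ ∧ v (k-1)`. -/
def IsAdaptedBasis (d : ℕ) (F : ℕ → Submodule ℂ (Fin d → ℂ)) (v : ℕ → Fin d → ℂ) : Prop :=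
  ∀ k, k ≤ d → F k = Submodule.span ℂ (v '' {m | m < k})

/-- A choice of adapted basis for a flag. -/
noncomputable def flagBasis (d : ℕ) (F : ℕ → Submodule ℂ (Fin d → ℂ)) : ℕ → Fin d → ℂ :=
  Classical.epsilon (IsAdaptedBasis d F)

/-- The scalar `f1^a ∧ f2^b ∧ f3^(d-a-b)`: the wedge product of the first `a` vectors of
`v1`, the first `b` vectors of `v2` and the first `d - a - b` vectors of `v3`, viewed as a
complex number via the determinant (i.e. via the standard identification `⋀^d ℂ^d ≅ ℂ`). -/
noncomputable def wedgeDet (d a b : ℕ) (v1 v2 v3 : ℕ → Fin d → ℂ) : ℂ :=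
  Matrix.det (Matrix.of fun (i j : Fin d) =>
    if (i : ℕ) < a then v1 (i : ℕ) j
    else if (i : ℕ) < a + b then v2 ((i : ℕ) - a) j
    else v3 ((i : ℕ) - a - b) j)

/-- The triple ratio `T^j(F1,F2,F3)` of a triple of flags in general position,
for `j = (j1,j2,j3)` with `j1 + j2 + j3 = d`. -/
noncomputable def tripleRatio (d : ℕ) (j : ℕ × ℕ × ℕ)
    (F1 F2 F3 : ℕ → Submodule ℂ (Fin d → ℂ)) : ℂ :=
  (wedgeDet d (j.1 + 1) j.2.1 (flagBasis d F1) (flagBasis d F2) (flagBasis d F3) *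
      wedgeDet d j.1 (j.2.1 - 1) (flagBasis d F1) (flagBasis d F2) (flagBasis d F3) *
      wedgeDet d (j.1 - 1) (j.2.1 + 1) (flagBasis d F1) (flagBasis d F2) (flagBasis d F3)) /
    (wedgeDet d (j.1 - 1) j.2.1 (flagBasis d F1) (flagBasis d F2) (flagBasis d F3) *
      wedgeDet d j.1 (j.2.1 + 1) (flagBasis d F1) (flagBasis d F2) (flagBasis d F3) *
      wedgeDet d (j.1 + 1) (j.2.1 - 1) (flagBasis d F1) (flagBasis d F2) (flagBasis d F3))

/-- A choice of nonzero vector in a (1-dimensional) subspace. -/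
noncomputable def lineVec (d : ℕ) (l : Submodule ℂ (Fin d → ℂ)) : Fin d → ℂ :=
  Classical.epsilon fun v => v ∈ l ∧ v ≠ 0

/-- The double ratio `D^i(G1,G2,ℓ1,ℓ2)` of a pair of transverse flags and a pair of lines,
for `i = (i1,i2)` with `i1 + i2 = d`. -/
noncomputable def doubleRatioLine (d : ℕ) (i : ℕ × ℕ) (G1 G2 : ℕ → Submodule ℂ (Fin d → ℂ))
    (l1 l2 : Submodule ℂ (Fin d → ℂ)) : ℂ :=
  -((wedgeDet d i.1 (i.2 - 1) (flagBasis d G1) (flagBasis d G2) (fun _ => lineVec d l1) *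
        wedgeDet d (i.1 - 1) i.2 (flagBasis d G1) (flagBasis d G2) (fun _ => lineVec d l2)) /
      (wedgeDet d i.1 (i.2 - 1) (flagBasis d G1) (flagBasis d G2) (fun _ => lineVec d l2) *
        wedgeDet d (i.1 - 1) i.2 (flagBasis d G1) (flagBasis d G2) (fun _ => lineVec d l1)))

/-- The double ratio `D^i(G1,G2,H1,H2)` of four flags, which only depends on the
`1`-dimensional parts of `H1` and `H2`. -/
noncomputable def doubleRatio (d : ℕ) (i : ℕ × ℕ)
    (G1 G2 H1 H2 : ℕ → Submodule ℂ (Fin d → ℂ)) : ℂ :=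
  doubleRatioLine d i G1 G2 (H1 1) (H2 1)

/-- The defining properties of the complex shear associated to `(E1, E2)` and the family of
nonzero scalars `w`: it is invertible, preserves both flags, and rescales the double ratio
`D^i(E1,E2,F,·G)` by `w i` for all flags `F`, `G` in general position with `(E1,E2)`. -/
def ShearProp (d : ℕ) (E1 E2 : ℕ → Submodule ℂ (Fin d → ℂ)) (w : ℕ × ℕ → ℂ)
    (c : Matrix (Fin d) (Fin d) ℂ) : Prop :=
  IsUnit c ∧ flagMap d c E1 = E1 ∧ flagMap d c E2 = E2 ∧
    ∀ F G : ℕ → Submodule ℂ (Fin d → ℂ), IsCompleteFlag d F → IsCompleteFlag d G →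
      GenPos3 d E1 E2 F → GenPos3 d E1 E2 G →
      GenPos3 d E1 E2 (flagMap d c G) ∧
        ∀ i : ℕ × ℕ, memA d i →
          doubleRatio d i E1 E2 F (flagMap d c G) = w i * doubleRatio d i E1 E2 F G

/-!
For `k < d` the lines `E1^(k+1) ∩ E2^(d-k)` form a basis of `ℂ^d` consisting of common eigenvectors
of every `c` preserving `E1` and `E2`. When `a + b = d - 1`, the linear form
`x ↦ e1^a ∧ e2^b ∧ x` vanishes on all of these lines but the `a`-th, so if `c` acts on the `k`-th
line by `μ k`, then `D^i(E1,E2,F,c·G) = (μ (i1-1) / μ i1) · D^i(E1,E2,F,G)`.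

For existence, take `c` diagonal with `μ (k-1) / μ k = w (k, d-k)`. For uniqueness, apply the
defining property to a single flag `H` in general position with `(E1,E2)`. Such a flag exists
because finitely many proper subspaces never cover `ℂ^d`, and `D^i(E1,E2,H,H) = -1 ≠ 0`. This
forces the same ratios, so the eigenvalues of `c` are determined up to a common factor.
-/

open Submodule Module

section LinearAlgebra

variable {K V : Type*} [Field K] [AddCommGroup V] [Module K V]

theorem Submodule.map_span_of_forall_eigen {L : V →ₗ[K] V} {s : Set V}
    (h : ∀ x ∈ s, ∃ μ : K, μ ≠ 0 ∧ L x = μ • x) : (span K s).map L = span K s := by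
  rw [map_span]
  refine le_antisymm (span_le.2 ?_) (span_le.2 fun x hx => ?_)
  · rintro _ ⟨x, hx, rfl⟩
    obtain ⟨μ, -, hμ⟩ := h x hx
    rw [hμ]
    exact smul_mem _ _ (subset_span hx)
  · obtain ⟨μ, hμ0, hμ⟩ := h x hx
    rw [← inv_smul_smul₀ hμ0 x, ← hμ]
    exact smul_mem _ _ (subset_span ⟨x, hx, rfl⟩)

theorem LinearMap.apply_apply_eq_mul_of_basis {ι : Type*} (B : Basis ι K V) {L : V →ₗ[K] V}
    {μ : ι → K} (hL : ∀ k, L (B k) = μ k • B k) {φ : V →ₗ[K] K} {a : ι}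
    (hφ : ∀ k, k ≠ a → φ (B k) = 0) (x : V) : φ (L x) = μ a * φ x := by
  have : φ ∘ₗ L = μ a • φ := B.ext fun k => by
    rcases eq_or_ne k a with rfl | hk
    · simp [hL]
    · simp [hL, hφ k hk]
  simpa using LinearMap.congr_fun this x

theorem Module.Basis.exists_isUnit_mulVecLin_eq_smul {n : Type*} [Fintype n] [DecidableEq n]
    (B : Basis n K (n → K)) {μ : n → K} (hμ : ∀ k, μ k ≠ 0) :
    ∃ c : Matrix n n K, IsUnit c ∧ ∀ k, c.mulVecLin (B k) = μ k • B k := by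
  let L := B.equiv (B.unitsSMul fun k => Units.mk0 (μ k) (hμ k)) (Equiv.refl n)
  have hc : (LinearMap.toMatrix' L.toLinearMap).mulVecLin = L := by
    rw [← Matrix.toLin'_apply', Matrix.toLin'_toMatrix']
  refine ⟨LinearMap.toMatrix' L.toLinearMap, ?_, fun k => ?_⟩
  · rw [← Matrix.mulVec_injective_iff_isUnit]
    change Function.Injective (LinearMap.toMatrix' L.toLinearMap).mulVecLin
    rw [hc]
    exact L.injective
  · rw [hc]
    simp [L, Basis.equiv_apply, Basis.unitsSMul_apply]

theorem Matrix.det_ne_zero_iff_span_rows_eq_top {n : Type*} [Fintype n] [DecidableEq n]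
    (M : Matrix n n K) : M.det ≠ 0 ↔ span K (Set.range M) = ⊤ := by
  rw [← isUnit_iff_ne_zero, ← Matrix.isUnit_iff_isUnit_det,
    ← Matrix.linearIndependent_rows_iff_isUnit]
  exact ⟨fun h => h.span_eq_top_of_card_eq_finrank' (by simp),
    fun h => linearIndependent_of_top_le_span_of_card_eq_finrank h.ge (by simp)⟩

theorem Submodule.ne_bot_of_finrank_eq_one {p : Submodule K V} (hp : finrank K p = 1) : p ≠ ⊥ := by
  rintro rfl
  simp at hp

variable [FiniteDimensional K V]

theorem Submodule.eq_sup_span_singleton_of_finrank_le {p q : Submodule K V} {x : V}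
    (hpq : p ≤ q) (hx : x ∈ q) (hxp : x ∉ p) (hq : finrank K q ≤ finrank K p + 1) :
    q = p ⊔ span K {x} :=
  (eq_of_le_of_finrank_le (sup_le hpq ((span_singleton_le_iff_mem _ _).2 hx))
    (by rwa [finrank_sup_span_singleton hxp])).symm

theorem Submodule.sup_span_singleton_eq_top_of_notMem {p : Submodule K V} {x y : V}
    (hy : p ⊔ span K {y} = ⊤) (hx : x ∉ p) : p ⊔ span K {x} = ⊤ := by
  have hyp : y ∉ p := fun h => hx <| by
    rw [sup_eq_left.2 ((span_singleton_le_iff_mem _ _).2 h)] at hy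
    exact hy ▸ mem_top
  refine eq_top_of_finrank_eq ?_
  rw [finrank_sup_span_singleton hx, ← finrank_sup_span_singleton hyp, hy, finrank_top]

end LinearAlgebra

section NatImage

variable {α : Type*} (v : ℕ → α)

theorem image_lt_eq_range (k : ℕ) : v '' {m | m < k} = Set.range fun i : Fin k => v i := by
  ext x
  exact ⟨fun ⟨m, hm, hx⟩ => ⟨⟨m, hm⟩, hx⟩, fun ⟨i, hi⟩ => ⟨i, i.2, hi⟩⟩

theorem image_lt_succ (k : ℕ) : v '' {m | m < k + 1} = insert (v k) (v '' {m | m < k}) := by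
  rw [← Set.image_insert_eq]
  congr 1
  ext m
  simp only [Set.mem_ofPred_eq, Set.mem_insert_iff]
  omega

theorem image_update_lt {n k : ℕ} (hk : k ≤ n) (x : α) :
    Function.update v n x '' {m | m < k} = v '' {m | m < k} :=
  Set.image_congr fun _ hm => Function.update_of_ne (Nat.lt_of_lt_of_le hm hk).ne x v

end NatImage

section Flags

variable {d : ℕ}

theorem lineVec_mem_ne_zero {l : Submodule ℂ (Fin d → ℂ)} (hl : l ≠ ⊥) :
    lineVec d l ∈ l ∧ lineVec d l ≠ 0 :=
  Classical.epsilon_spec (exists_mem_ne_zero_of_ne_bot hl)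

theorem span_lineVec {l : Submodule ℂ (Fin d → ℂ)} (hl : finrank ℂ l = 1) :
    span ℂ {lineVec d l} = l := by
  obtain ⟨hmem, hne⟩ := lineVec_mem_ne_zero (ne_bot_of_finrank_eq_one hl)
  exact (eq_span_singleton_of_mem_of_finrank_eq_one hl hmem hne).symm

theorem exists_lineVec_span_singleton_eq_smul {x : Fin d → ℂ} (hx : x ≠ 0) :
    ∃ ν : ℂ, ν ≠ 0 ∧ lineVec d (span ℂ {x}) = ν • x := by
  obtain ⟨hmem, hne⟩ := lineVec_mem_ne_zero (d := d) ((span_singleton_eq_bot (R := ℂ)).not.2 hx)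
  obtain ⟨ν, hν⟩ := mem_span_singleton.1 hmem
  exact ⟨ν, fun h => hne (by rw [← hν, h, zero_smul]), hν.symm⟩

namespace IsCompleteFlag

variable {F : ℕ → Submodule ℂ (Fin d → ℂ)}

theorem eq_bot (hF : IsCompleteFlag d F) : F 0 = ⊥ :=
  finrank_eq_zero.1 (hF.2 0 (Nat.zero_le d))

theorem eq_top (hF : IsCompleteFlag d F) {k : ℕ} (hk : d ≤ k) : F k = ⊤ :=
  top_le_iff.1 <| (eq_top_of_finrank_eq (by simp [hF.2 d le_rfl])).ge.trans (hF.1 hk)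

theorem isAdaptedBasis_of_mem_of_notMem (hF : IsCompleteFlag d F) {e : ℕ → Fin d → ℂ}
    (he : ∀ k < d, e k ∈ F (k + 1) ∧ e k ∉ F k) : IsAdaptedBasis d F e := by
  intro k hk
  induction k with
  | zero => simp [hF.eq_bot]
  | succ k ih =>
    obtain ⟨hmem, hnotMem⟩ := he k hk
    rw [eq_sup_span_singleton_of_finrank_le (hF.1 k.le_succ) hmem hnotMem
      (by rw [hF.2 _ hk, hF.2 _ (by omega)]), ih (by omega), image_lt_succ, span_insert, sup_comm]

theorem exists_mem_succ_notMem (hF : IsCompleteFlag d F) {k : ℕ} (hk : k < d) :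
    ∃ x ∈ F (k + 1), x ∉ F k := by
  refine SetLike.exists_of_lt (lt_of_le_of_ne (hF.1 k.le_succ) fun h => ?_)
  have := hF.2 (k + 1) hk
  rw [← h, hF.2 k hk.le] at this
  omega

theorem exists_eq_sup_span_singleton (hF : IsCompleteFlag d F) {k : ℕ} (hk : k < d) :
    ∃ x, F (k + 1) = F k ⊔ span ℂ {x} := by
  obtain ⟨x, hx, hxn⟩ := hF.exists_mem_succ_notMem hk
  exact ⟨x, eq_sup_span_singleton_of_finrank_le (hF.1 k.le_succ) hx hxn
    (by rw [hF.2 _ hk, hF.2 _ hk.le])⟩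

theorem exists_isAdaptedBasis (hF : IsCompleteFlag d F) : ∃ e, IsAdaptedBasis d F e := by
  have : ∀ k, ∃ x, k < d → x ∈ F (k + 1) ∧ x ∉ F k := fun k => by
    by_cases hk : k < d
    · obtain ⟨x, hx, hxn⟩ := hF.exists_mem_succ_notMem hk
      exact ⟨x, fun _ => ⟨hx, hxn⟩⟩
    · exact ⟨0, fun h => absurd h hk⟩
  choose e he using this
  exact ⟨e, hF.isAdaptedBasis_of_mem_of_notMem he⟩

theorem isAdaptedBasis_flagBasis (hF : IsCompleteFlag d F) : IsAdaptedBasis d F (flagBasis d F) :=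
  Classical.epsilon_spec hF.exists_isAdaptedBasis

end IsCompleteFlag

namespace IsAdaptedBasis

variable {F : ℕ → Submodule ℂ (Fin d → ℂ)} {e : ℕ → Fin d → ℂ}

theorem span_eq_top (hF : IsCompleteFlag d F) (he : IsAdaptedBasis d F e) :
    span ℂ (Set.range fun i : Fin d => e i) = ⊤ := by
  rw [← hF.eq_top le_rfl, he d le_rfl, image_lt_eq_range]

def toBasis (hF : IsCompleteFlag d F) (he : IsAdaptedBasis d F e) :
    Basis (Fin d) ℂ (Fin d → ℂ) :=
  basisOfTopLeSpanOfCardEqFinrank _ (he.span_eq_top hF).ge (by simp)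

theorem toBasis_apply (hF : IsCompleteFlag d F) (he : IsAdaptedBasis d F e) (i : Fin d) :
    he.toBasis hF i = e i := by
  simp [toBasis]

theorem flagMap_eq (hF : IsCompleteFlag d F) (he : IsAdaptedBasis d F e)
    {c : Matrix (Fin d) (Fin d) ℂ}
    (heig : ∀ k < d, ∃ μ : ℂ, μ ≠ 0 ∧ c.mulVecLin (e k) = μ • e k) : flagMap d c F = F := by
  have hspan : ∀ k ≤ d, (F k).map c.mulVecLin = F k := fun k hk => by
    rw [he k hk]
    exact map_span_of_forall_eigen fun _ ⟨m, hm, hx⟩ => hx ▸ heig m (lt_of_lt_of_le hm hk)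
  funext k
  rcases le_or_gt k d with hk | hk
  · exact hspan k hk
  · rw [flagMap, hF.eq_top hk.le, ← hF.eq_top le_rfl]
    exact hspan d le_rfl

end IsAdaptedBasis

theorem isCompleteFlag_span_image_lt {v : ℕ → Fin d → ℂ}
    (hv : span ℂ (v '' {m | m < d}) = ⊤) : IsCompleteFlag d fun k => span ℂ (v '' {m | m < k}) := by
  have hli : LinearIndependent ℂ fun i : Fin d => v i :=
    linearIndependent_of_top_le_span_of_card_eq_finrank (by rw [← image_lt_eq_range, hv]) (by simp)
  refine ⟨fun a b hab => span_mono (Set.image_mono fun m hm => lt_of_lt_of_le hm hab),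
    fun k hk => ?_⟩
  change finrank ℂ (span ℂ (v '' {m | m < k})) = k
  rw [image_lt_eq_range]
  exact (finrank_span_eq_card (hli.comp _ (Fin.castLE_injective hk))).trans (Fintype.card_fin k)

section TransversePair

variable {E1 E2 : ℕ → Submodule ℂ (Fin d → ℂ)}

namespace TransverseFlags

theorem inf_eq_bot (hE1 : IsCompleteFlag d E1) (hE2 : IsCompleteFlag d E2)
    (htr : TransverseFlags d E1 E2) {k : ℕ} (hk : k ≤ d) : E1 k ⊓ E2 (d - k) = ⊥ := by
  have h := Submodule.finrank_sup_add_finrank_inf_eq (E1 k) (E2 (d - k))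
  rw [htr k hk, finrank_top, finrank_fin_fun, hE1.2 k hk, hE2.2 (d - k) (by omega)] at h
  exact finrank_eq_zero.1 (by omega)

theorem finrank_inf_succ (hE1 : IsCompleteFlag d E1) (hE2 : IsCompleteFlag d E2)
    (htr : TransverseFlags d E1 E2) {k : ℕ} (hk : k < d) :
    finrank ℂ ↥(E1 (k + 1) ⊓ E2 (d - k)) = 1 := by
  have hsup : E1 (k + 1) ⊔ E2 (d - k) = ⊤ :=
    top_le_iff.1 (htr k hk.le ▸ sup_le_sup_right (hE1.1 k.le_succ) _)
  have h := Submodule.finrank_sup_add_finrank_inf_eq (E1 (k + 1)) (E2 (d - k))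
  rw [hsup, finrank_top, finrank_fin_fun, hE1.2 _ hk, hE2.2 _ (by omega)] at h
  omega

end TransverseFlags

/-- For `k < d`, `E1^(k+1) ∩ E2^(d-k)` is a line; these `d` lines are the common eigenlines of
all elements preserving both flags. -/
def commonVec (d : ℕ) (E1 E2 : ℕ → Submodule ℂ (Fin d → ℂ)) (k : ℕ) : Fin d → ℂ :=
  lineVec d (E1 (k + 1) ⊓ E2 (d - k))

theorem span_commonVec (hE1 : IsCompleteFlag d E1) (hE2 : IsCompleteFlag d E2)
    (htr : TransverseFlags d E1 E2) {k : ℕ} (hk : k < d) :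
    span ℂ {commonVec d E1 E2 k} = E1 (k + 1) ⊓ E2 (d - k) :=
  span_lineVec (htr.finrank_inf_succ hE1 hE2 hk)

theorem commonVec_mem (hE1 : IsCompleteFlag d E1) (hE2 : IsCompleteFlag d E2)
    (htr : TransverseFlags d E1 E2) {k : ℕ} (hk : k < d) :
    commonVec d E1 E2 k ∈ E1 (k + 1) ⊓ E2 (d - k) :=
  span_commonVec hE1 hE2 htr hk ▸ mem_span_singleton_self _

theorem commonVec_ne_zero (hE1 : IsCompleteFlag d E1) (hE2 : IsCompleteFlag d E2)
    (htr : TransverseFlags d E1 E2) {k : ℕ} (hk : k < d) : commonVec d E1 E2 k ≠ 0 :=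
  (lineVec_mem_ne_zero (ne_bot_of_finrank_eq_one (htr.finrank_inf_succ hE1 hE2 hk))).2

theorem isAdaptedBasis_commonVec (hE1 : IsCompleteFlag d E1) (hE2 : IsCompleteFlag d E2)
    (htr : TransverseFlags d E1 E2) : IsAdaptedBasis d E1 (commonVec d E1 E2) := by
  refine hE1.isAdaptedBasis_of_mem_of_notMem fun k hk =>
    ⟨(commonVec_mem hE1 hE2 htr hk).1, fun h => commonVec_ne_zero hE1 hE2 htr hk ?_⟩
  have : commonVec d E1 E2 k ∈ E1 k ⊓ E2 (d - k) := ⟨h, (commonVec_mem hE1 hE2 htr hk).2⟩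
  rwa [htr.inf_eq_bot hE1 hE2 hk.le] at this

theorem isAdaptedBasis_commonVec_rev (hE1 : IsCompleteFlag d E1) (hE2 : IsCompleteFlag d E2)
    (htr : TransverseFlags d E1 E2) :
    IsAdaptedBasis d E2 fun m => commonVec d E1 E2 (d - 1 - m) := by
  refine hE2.isAdaptedBasis_of_mem_of_notMem fun k hk => ?_
  have hk' : d - 1 - k < d := by omega
  obtain ⟨h1, h2⟩ := commonVec_mem hE1 hE2 htr hk'
  rw [show d - (d - 1 - k) = k + 1 by omega] at h2
  rw [show d - 1 - k + 1 = d - k by omega] at h1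
  refine ⟨h2, fun h => commonVec_ne_zero hE1 hE2 htr hk' ?_⟩
  have : commonVec d E1 E2 (d - 1 - k) ∈ E1 (d - k) ⊓ E2 (d - (d - k)) :=
    ⟨h1, by rwa [show d - (d - k) = k by omega]⟩
  rwa [htr.inf_eq_bot hE1 hE2 (by omega)] at this

theorem exists_eigenvalue_commonVec (hE1 : IsCompleteFlag d E1) (hE2 : IsCompleteFlag d E2)
    (htr : TransverseFlags d E1 E2) {L : (Fin d → ℂ) →ₗ[ℂ] Fin d → ℂ}
    (hL : Function.Injective L) (h1 : ∀ k, (E1 k).map L = E1 k) (h2 : ∀ k, (E2 k).map L = E2 k)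
    {k : ℕ} (hk : k < d) :
    ∃ μ : ℂ, μ ≠ 0 ∧ L (commonVec d E1 E2 k) = μ • commonVec d E1 E2 k := by
  have hmem : L (commonVec d E1 E2 k) ∈ span ℂ {commonVec d E1 E2 k} := by
    rw [span_commonVec hE1 hE2 htr hk, ← h1 (k + 1), ← h2 (d - k)]
    exact ⟨mem_map_of_mem (commonVec_mem hE1 hE2 htr hk).1,
      mem_map_of_mem (commonVec_mem hE1 hE2 htr hk).2⟩
  obtain ⟨μ, hμ⟩ := mem_span_singleton.1 hmem
  refine ⟨μ, ?_, hμ.symm⟩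
  rintro rfl
  exact commonVec_ne_zero hE1 hE2 htr hk (hL (by rw [← hμ, zero_smul, map_zero]))

theorem sup_sup_span_image_lt_ne_top (hE1 : IsCompleteFlag d E1) (hE2 : IsCompleteFlag d E2)
    (v : ℕ → Fin d → ℂ) {k1 k2 n : ℕ} (h : k1 + k2 + n < d) :
    E1 k1 ⊔ E2 k2 ⊔ span ℂ (v '' {m | m < n}) ≠ ⊤ := by
  intro htop
  have hS : finrank ℂ (span ℂ (v '' {m | m < n})) ≤ n := by
    rw [image_lt_eq_range]
    exact (finrank_range_le_card (R := ℂ) fun i : Fin n => v i).trans (by simp)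
  have h1 := finrank_add_le_finrank_add_finrank (E1 k1 ⊔ E2 k2) (span ℂ (v '' {m | m < n}))
  have h2 := finrank_add_le_finrank_add_finrank (E1 k1) (E2 k2)
  rw [htop, finrank_top, finrank_fin_fun] at h1
  rw [hE1.2 _ (by omega), hE2.2 _ (by omega)] at h2
  omega

/-- The `(n+1)`-st vector only has to avoid the `d - n` hyperplanes `E1^k1 + E2^k2 + H^n` with
`k1 + k2 = d - n - 1`, and finitely many proper subspaces never cover `ℂ^d`. -/
theorem exists_vectors_genPos3 (hE1 : IsCompleteFlag d E1) (hE2 : IsCompleteFlag d E2)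
    (htr : TransverseFlags d E1 E2) (n : ℕ) :
    ∃ v : ℕ → Fin d → ℂ, ∀ k1 k2 k3, k1 + k2 + k3 = d → k3 ≤ n →
      E1 k1 ⊔ E2 k2 ⊔ span ℂ (v '' {m | m < k3}) = ⊤ := by
  induction n with
  | zero =>
    refine ⟨0, fun k1 k2 k3 hsum hk3 => ?_⟩
    obtain rfl : k3 = 0 := by omega
    simpa [show k2 = d - k1 by omega] using htr k1 (by omega)
  | succ n ih =>
    obtain ⟨v, hv⟩ := ih
    obtain ⟨x, hx⟩ := exists_forall_notMem_of_forall_ne_top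
      (fun k1 : Fin (d - n) => E1 k1 ⊔ E2 (d - n - 1 - k1) ⊔ span ℂ (v '' {m | m < n}))
      fun k1 => sup_sup_span_image_lt_ne_top hE1 hE2 v (by omega)
    refine ⟨Function.update v n x, fun k1 k2 k3 hsum hk3 => ?_⟩
    rcases hk3.lt_or_eq with hk3 | rfl
    · rw [image_update_lt v (by omega)]
      exact hv k1 k2 k3 hsum (by omega)
    · rw [image_lt_succ, Function.update_self, image_update_lt v le_rfl, span_insert]
      obtain ⟨y, hy⟩ := hE2.exists_eq_sup_span_singleton (k := k2) (by omega)
      have hyS : E1 k1 ⊔ E2 k2 ⊔ span ℂ (v '' {m | m < n}) ⊔ span ℂ {y} = ⊤ := by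
        rw [← hv k1 (k2 + 1) n (by omega) le_rfl, hy]
        ac_rfl
      have hxS := sup_span_singleton_eq_top_of_notMem hyS
        (by simpa [show d - n - 1 - k1 = k2 by omega] using hx ⟨k1, by omega⟩)
      rw [← hxS]
      ac_rfl

theorem exists_isCompleteFlag_genPos3 (hE1 : IsCompleteFlag d E1) (hE2 : IsCompleteFlag d E2)
    (htr : TransverseFlags d E1 E2) : ∃ H, IsCompleteFlag d H ∧ GenPos3 d E1 E2 H := by
  obtain ⟨v, hv⟩ := exists_vectors_genPos3 hE1 hE2 htr d
  refine ⟨_, isCompleteFlag_span_image_lt ?_, fun k1 k2 k3 hsum => hv k1 k2 k3 hsum (by omega)⟩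
  simpa [hE1.eq_bot, hE2.eq_bot] using hv 0 0 d (by omega) le_rfl

end TransversePair

theorem memA.add_pred_add_one {i : ℕ × ℕ} (hi : memA d i) : i.1 + (i.2 - 1) + 1 = d := by
  obtain ⟨_, _, _⟩ := hi
  omega

theorem memA.pred_add_add_one {i : ℕ × ℕ} (hi : memA d i) : i.1 - 1 + i.2 + 1 = d := by
  obtain ⟨_, _, _⟩ := hi
  omega

section WedgeForm

def wedgeRows (d a b : ℕ) (u v : ℕ → Fin d → ℂ) (x : Fin d → ℂ) : Fin d → Fin d → ℂ :=
  fun i => if (i : ℕ) < a then u i else if (i : ℕ) < a + b then v (i - a) else x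

theorem wedgeDet_const (a b : ℕ) (u v : ℕ → Fin d → ℂ) (x : Fin d → ℂ) :
    wedgeDet d a b u v (fun _ => x) = (Matrix.of (wedgeRows d a b u v x)).det := by
  simp only [wedgeDet]
  congr 1
  ext i j
  simp only [Matrix.of_apply, wedgeRows]
  split_ifs <;> rfl

theorem update_wedgeRows {a b : ℕ} (hab : a + b + 1 = d) (u v : ℕ → Fin d → ℂ)
    (x y : Fin d → ℂ) :
    Function.update (wedgeRows d a b u v y) ⟨a + b, by omega⟩ x = wedgeRows d a b u v x := by
  funext i
  rcases eq_or_ne i ⟨a + b, by omega⟩ with rfl | hi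
  · simp [wedgeRows]
  · have : (i : ℕ) < a + b := by
      have := i.2
      have : (i : ℕ) ≠ a + b := fun h => hi (Fin.ext h)
      omega
    simp [Function.update_of_ne hi, wedgeRows, this]

theorem span_range_wedgeRows {a b : ℕ} (hab : a + b + 1 = d) (u v : ℕ → Fin d → ℂ)
    (x : Fin d → ℂ) : span ℂ (Set.range (wedgeRows d a b u v x)) =
      span ℂ (u '' {m | m < a}) ⊔ span ℂ (v '' {m | m < b}) ⊔ span ℂ {x} := by
  rw [← span_union, ← span_union]
  congr 1
  ext y
  constructor
  · rintro ⟨i, rfl⟩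
    simp only [wedgeRows]
    split_ifs with h1 h2
    · exact Or.inl (Or.inl ⟨i, h1, rfl⟩)
    · exact Or.inl (Or.inr ⟨i - a, by simp only [Set.mem_ofPred_eq]; omega, rfl⟩)
    · exact Or.inr rfl
  · rintro ((⟨m, hm, rfl⟩ | ⟨m, hm, rfl⟩) | rfl)
    · simp only [Set.mem_ofPred_eq] at hm
      exact ⟨⟨m, by omega⟩, by simp [wedgeRows, hm]⟩
    · simp only [Set.mem_ofPred_eq] at hm
      exact ⟨⟨a + m, by omega⟩, by simp [wedgeRows, hm]⟩
    · exact ⟨⟨a + b, by omega⟩, by simp [wedgeRows]⟩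

/-- For `a + b + 1 = d`, the linear form `x ↦ u^a ∧ v^b ∧ x` of `wedgeDet`. -/
def wedgeForm (a b : ℕ) (hab : a + b + 1 = d) (u v : ℕ → Fin d → ℂ) : (Fin d → ℂ) →ₗ[ℂ] ℂ :=
  (Matrix.detRowAlternating : (Fin d → ℂ) [⋀^Fin d]→ₗ[ℂ] ℂ).toMultilinearMap.toLinearMap
    (wedgeRows d a b u v 0) ⟨a + b, by omega⟩

theorem wedgeForm_apply {a b : ℕ} (hab : a + b + 1 = d) (u v : ℕ → Fin d → ℂ) (x : Fin d → ℂ) :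
    wedgeForm a b hab u v x = wedgeDet d a b u v (fun _ => x) := by
  rw [wedgeDet_const, wedgeForm, MultilinearMap.toLinearMap_apply, update_wedgeRows hab]
  rfl

variable {E1 E2 : ℕ → Submodule ℂ (Fin d → ℂ)} {u v : ℕ → Fin d → ℂ}

theorem wedgeForm_ne_zero_iff (hu : IsAdaptedBasis d E1 u) (hv : IsAdaptedBasis d E2 v)
    {a b : ℕ} (hab : a + b + 1 = d) (x : Fin d → ℂ) :
    wedgeForm a b hab u v x ≠ 0 ↔ E1 a ⊔ E2 b ⊔ span ℂ {x} = ⊤ := by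
  rw [wedgeForm_apply, wedgeDet_const, Matrix.det_ne_zero_iff_span_rows_eq_top]
  change span ℂ (Set.range (wedgeRows d a b u v x)) = ⊤ ↔ _
  rw [span_range_wedgeRows hab, ← hu a (by omega), ← hv b (by omega)]

theorem wedgeForm_eq_zero_of_mem (hE1 : IsCompleteFlag d E1) (hE2 : IsCompleteFlag d E2)
    (hu : IsAdaptedBasis d E1 u) (hv : IsAdaptedBasis d E2 v) {a b : ℕ} (hab : a + b + 1 = d)
    {x : Fin d → ℂ} (hx : x ∈ E1 a ⊔ E2 b) : wedgeForm a b hab u v x = 0 := by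
  by_contra h
  rw [← ne_eq, wedgeForm_ne_zero_iff hu hv, sup_eq_left.2 ((span_singleton_le_iff_mem _ _).2 hx)] at h
  have := finrank_add_le_finrank_add_finrank (E1 a) (E2 b)
  rw [h, finrank_top, finrank_fin_fun, hE1.2 a (by omega), hE2.2 b (by omega)] at this
  omega

/-- `x ↦ u^a ∧ v^b ∧ x` vanishes on every common eigenline of `(E1, E2)` except the `a`-th. -/
theorem wedgeForm_apply_eigen (hE1 : IsCompleteFlag d E1) (hE2 : IsCompleteFlag d E2)
    (htr : TransverseFlags d E1 E2) (hu : IsAdaptedBasis d E1 u) (hv : IsAdaptedBasis d E2 v)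
    {a b : ℕ} (hab : a + b + 1 = d) {L : (Fin d → ℂ) →ₗ[ℂ] Fin d → ℂ} {μ : ℕ → ℂ}
    (hL : ∀ k < d, L (commonVec d E1 E2 k) = μ k • commonVec d E1 E2 k) (x : Fin d → ℂ) :
    wedgeForm a b hab u v (L x) = μ a * wedgeForm a b hab u v x := by
  have he := isAdaptedBasis_commonVec hE1 hE2 htr
  refine LinearMap.apply_apply_eq_mul_of_basis (he.toBasis hE1) (μ := fun k : Fin d => μ k)
    (a := ⟨a, by omega⟩) (fun k => by rw [he.toBasis_apply]; exact hL k k.2) (fun k hka => ?_) x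
  rw [he.toBasis_apply]
  refine wedgeForm_eq_zero_of_mem hE1 hE2 hu hv hab ?_
  obtain ⟨h1, h2⟩ := commonVec_mem hE1 hE2 htr k.2
  rcases (show (k : ℕ) ≠ a from fun h => hka (Fin.ext h)).lt_or_gt with h | h
  · exact mem_sup_left (hE1.1 (by omega : (k : ℕ) + 1 ≤ a) h1)
  · exact mem_sup_right (hE2.1 (by omega : d - k ≤ b) h2)

end WedgeForm

section DoubleRatio

variable {E1 E2 : ℕ → Submodule ℂ (Fin d → ℂ)} {i : ℕ × ℕ}

theorem doubleRatio_eq_wedgeForm (hi : memA d i) (G1 G2 H1 H2 : ℕ → Submodule ℂ (Fin d → ℂ)) :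
    doubleRatio d i G1 G2 H1 H2 =
      -((wedgeForm i.1 (i.2 - 1) hi.add_pred_add_one (flagBasis d G1) (flagBasis d G2)
            (lineVec d (H1 1)) *
          wedgeForm (i.1 - 1) i.2 hi.pred_add_add_one (flagBasis d G1) (flagBasis d G2)
            (lineVec d (H2 1))) /
        (wedgeForm i.1 (i.2 - 1) hi.add_pred_add_one (flagBasis d G1) (flagBasis d G2)
            (lineVec d (H2 1)) *
          wedgeForm (i.1 - 1) i.2 hi.pred_add_add_one (flagBasis d G1) (flagBasis d G2)
            (lineVec d (H1 1)))) := by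
  simp only [wedgeForm_apply]
  rfl

theorem doubleRatio_flagMap_of_eigen (hE1 : IsCompleteFlag d E1) (hE2 : IsCompleteFlag d E2)
    (htr : TransverseFlags d E1 E2) {c : Matrix (Fin d) (Fin d) ℂ}
    (hc : Function.Injective c.mulVecLin) {μ : ℕ → ℂ}
    (hμ : ∀ k < d, c.mulVecLin (commonVec d E1 E2 k) = μ k • commonVec d E1 E2 k)
    (F : ℕ → Submodule ℂ (Fin d → ℂ)) {G : ℕ → Submodule ℂ (Fin d → ℂ)}
    (hG : finrank ℂ (G 1) = 1) (hi : memA d i) :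
    doubleRatio d i E1 E2 F (flagMap d c G) = μ (i.1 - 1) / μ i.1 * doubleRatio d i E1 E2 F G := by
  have hu := hE1.isAdaptedBasis_flagBasis
  have hv := hE2.isAdaptedBasis_flagBasis
  set g := lineVec d (G 1)
  have hg : g ≠ 0 := (lineVec_mem_ne_zero (ne_bot_of_finrank_eq_one hG)).2
  obtain ⟨ν, hν, hνg⟩ := exists_lineVec_span_singleton_eq_smul (d := d) (x := c.mulVecLin g)
    fun h => hg (hc (h.trans (map_zero _).symm))
  have hcG : flagMap d c G 1 = span ℂ {c.mulVecLin g} := by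
    rw [flagMap, ← span_lineVec hG, map_span, Set.image_singleton]
  have hscale : ∀ A B C D μ0 μ1 : ℂ, -((A * (ν * (μ0 * B))) / ((ν * (μ1 * C)) * D)) =
      μ0 / μ1 * -((A * B) / (C * D)) := fun A B C D μ0 μ1 => by
    rw [show -((A * (ν * (μ0 * B))) / ((ν * (μ1 * C)) * D)) =
      (ν * ν⁻¹) * (μ0 / μ1 * -((A * B) / (C * D))) by ring, mul_inv_cancel₀ hν, one_mul]
  rw [doubleRatio_eq_wedgeForm hi, doubleRatio_eq_wedgeForm hi, hcG, hνg, map_smul, map_smul,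
    wedgeForm_apply_eigen hE1 hE2 htr hu hv _ hμ, wedgeForm_apply_eigen hE1 hE2 htr hu hv _ hμ,
    smul_eq_mul, smul_eq_mul, hscale]

theorem doubleRatio_self (hE1 : IsCompleteFlag d E1) (hE2 : IsCompleteFlag d E2)
    {H : ℕ → Submodule ℂ (Fin d → ℂ)} (hH : IsCompleteFlag d H) (hgen : GenPos3 d E1 E2 H)
    (hi : memA d i) : doubleRatio d i E1 E2 H H = -1 := by
  have hu := hE1.isAdaptedBasis_flagBasis
  have hv := hE2.isAdaptedBasis_flagBasis
  have hspan := span_lineVec (hH.2 1 (by obtain ⟨_, _, _⟩ := hi; omega))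
  have h1 := (wedgeForm_ne_zero_iff hu hv hi.add_pred_add_one (lineVec d (H 1))).2
    (by rw [hspan]; exact hgen _ _ _ (by have := hi.add_pred_add_one; omega))
  have h2 := (wedgeForm_ne_zero_iff hu hv hi.pred_add_add_one (lineVec d (H 1))).2
    (by rw [hspan]; exact hgen _ _ _ (by have := hi.pred_add_add_one; omega))
  rw [doubleRatio_eq_wedgeForm hi, div_self (mul_ne_zero h1 h2)]

end DoubleRatio

section Shear

variable {E1 E2 : ℕ → Submodule ℂ (Fin d → ℂ)} {w : ℕ × ℕ → ℂ}

theorem genPos3_flagMap {c : Matrix (Fin d) (Fin d) ℂ} (hc : IsUnit c)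
    (h1 : flagMap d c E1 = E1) (h2 : flagMap d c E2 = E2) {G : ℕ → Submodule ℂ (Fin d → ℂ)}
    (hG : GenPos3 d E1 E2 G) : GenPos3 d E1 E2 (flagMap d c G) := by
  intro k1 k2 k3 hsum
  rw [← congrFun h1 k1, ← congrFun h2 k2]
  simp only [flagMap]
  rw [← Submodule.map_sup, ← Submodule.map_sup, hG k1 k2 k3 hsum, Submodule.map_top, LinearMap.range_eq_top]
  exact Matrix.mulVec_surjective_iff_isUnit.2 hc

/-- The solution of `μ (k-1) / μ k = w (k, d-k)` normalised by `μ (d-1) = 1`. -/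
def shearEigenvalue (d : ℕ) (w : ℕ × ℕ → ℂ) (k : ℕ) : ℂ :=
  ∏ a ∈ Finset.Ico (k + 1) d, w (a, d - a)

theorem shearEigenvalue_ne_zero (hw : ∀ i, memA d i → w i ≠ 0) (k : ℕ) :
    shearEigenvalue d w k ≠ 0 :=
  Finset.prod_ne_zero_iff.2 fun a ha => hw _ (by simp only [Finset.mem_Ico] at ha; exact ⟨by omega, by omega, by omega⟩)

theorem shearEigenvalue_div (hw : ∀ i, memA d i → w i ≠ 0) {i : ℕ × ℕ} (hi : memA d i) :
    shearEigenvalue d w (i.1 - 1) / shearEigenvalue d w i.1 = w i := by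
  obtain ⟨hi1, hi2, hsum⟩ := hi
  rw [shearEigenvalue, Nat.sub_add_cancel hi1, Finset.prod_eq_prod_Ico_succ_bot (by omega),
    ← shearEigenvalue, mul_div_cancel_right₀ _ (shearEigenvalue_ne_zero hw _),
    show d - i.1 = i.2 by omega]

theorem exists_shearProp (hE1 : IsCompleteFlag d E1) (hE2 : IsCompleteFlag d E2)
    (htr : TransverseFlags d E1 E2) (hw : ∀ i, memA d i → w i ≠ 0) :
    ∃ c, ShearProp d E1 E2 w c := by
  have he := isAdaptedBasis_commonVec hE1 hE2 htr
  have hμ := shearEigenvalue_ne_zero hw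
  obtain ⟨c, hc, hcμ⟩ := (he.toBasis hE1).exists_isUnit_mulVecLin_eq_smul
    (μ := fun k : Fin d => shearEigenvalue d w k) fun k => hμ k
  have hL : ∀ k < d, c.mulVecLin (commonVec d E1 E2 k) =
      shearEigenvalue d w k • commonVec d E1 E2 k := fun k hk => by
    simpa [he.toBasis_apply] using hcμ ⟨k, hk⟩
  have h1 : flagMap d c E1 = E1 := he.flagMap_eq hE1 fun k hk => ⟨_, hμ k, hL k hk⟩
  have h2 : flagMap d c E2 = E2 := (isAdaptedBasis_commonVec_rev hE1 hE2 htr).flagMap_eq hE2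
    fun k hk => ⟨_, hμ (d - 1 - k), hL _ (by omega)⟩
  refine ⟨c, hc, h1, h2, fun F G _ hG _ hgG => ⟨genPos3_flagMap hc h1 h2 hgG, fun i hi => ?_⟩⟩
  rw [doubleRatio_flagMap_of_eigen hE1 hE2 htr (Matrix.mulVec_injective_iff_isUnit.2 hc) hL F
    (hG.2 1 (by obtain ⟨_, _, _⟩ := hi; omega)) hi, shearEigenvalue_div hw hi]

namespace ShearProp

variable {c c' : Matrix (Fin d) (Fin d) ℂ}

theorem exists_eigenvalues (hE1 : IsCompleteFlag d E1) (hE2 : IsCompleteFlag d E2)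
    (htr : TransverseFlags d E1 E2) (hc : ShearProp d E1 E2 w c) :
    ∃ μ : ℕ → ℂ, (∀ k, μ k ≠ 0) ∧
      ∀ k < d, c.mulVecLin (commonVec d E1 E2 k) = μ k • commonVec d E1 E2 k := by
  have : ∀ k, ∃ μ : ℂ, μ ≠ 0 ∧
      (k < d → c.mulVecLin (commonVec d E1 E2 k) = μ • commonVec d E1 E2 k) := fun k => by
    by_cases hk : k < d
    · obtain ⟨μ, hμ, h⟩ := exists_eigenvalue_commonVec hE1 hE2 htr
        (Matrix.mulVec_injective_iff_isUnit.2 hc.1) (congrFun hc.2.1) (congrFun hc.2.2.1) hk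
      exact ⟨μ, hμ, fun _ => h⟩
    · exact ⟨1, one_ne_zero, fun h => absurd h hk⟩
  choose μ hμ0 hμ using this
  exact ⟨μ, hμ0, hμ⟩

theorem eigenvalue_div (hE1 : IsCompleteFlag d E1) (hE2 : IsCompleteFlag d E2)
    (htr : TransverseFlags d E1 E2) (hc : ShearProp d E1 E2 w c) {μ : ℕ → ℂ}
    (hμ : ∀ k < d, c.mulVecLin (commonVec d E1 E2 k) = μ k • commonVec d E1 E2 k)
    {i : ℕ × ℕ} (hi : memA d i) : μ (i.1 - 1) / μ i.1 = w i := by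
  obtain ⟨H, hH, hgen⟩ := exists_isCompleteFlag_genPos3 hE1 hE2 htr
  have h := (hc.2.2.2 H H hH hH hgen hgen).2 i hi
  rwa [doubleRatio_flagMap_of_eigen hE1 hE2 htr (Matrix.mulVec_injective_iff_isUnit.2 hc.1) hμ H
    (hH.2 1 (by obtain ⟨_, _, _⟩ := hi; omega)) hi, doubleRatio_self hE1 hE2 hH hgen hi,
    mul_left_inj' (neg_ne_zero.2 one_ne_zero)] at h

theorem unique (hE1 : IsCompleteFlag d E1) (hE2 : IsCompleteFlag d E2)
    (htr : TransverseFlags d E1 E2) (hc : ShearProp d E1 E2 w c)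
    (hc' : ShearProp d E1 E2 w c') : ∃ γ : ℂ, γ ≠ 0 ∧ c' = γ • c := by
  obtain ⟨μ, hμ0, hμ⟩ := hc.exists_eigenvalues hE1 hE2 htr
  obtain ⟨μ', hμ0', hμ'⟩ := hc'.exists_eigenvalues hE1 hE2 htr
  have hprop : ∀ k < d, μ' k = μ' 0 / μ 0 * μ k := by
    intro k hk
    induction k with
    | zero => rw [div_mul_cancel₀ _ (hμ0 0)]
    | succ k ih =>
      have hi : memA d (k + 1, d - (k + 1)) := ⟨by omega, by omega, by omega⟩
      have h := (hc.eigenvalue_div hE1 hE2 htr hμ hi).trans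
        (hc'.eigenvalue_div hE1 hE2 htr hμ' hi).symm
      rw [Nat.add_sub_cancel, div_eq_div_iff (hμ0 _) (hμ0' _), ih (by omega)] at h
      dsimp only at h
      refine mul_left_cancel₀ (hμ0 k) ?_
      linear_combination h
  have he := isAdaptedBasis_commonVec hE1 hE2 htr
  refine ⟨μ' 0 / μ 0, div_ne_zero (hμ0' 0) (hμ0 0),
    Matrix.toLin'.injective ((he.toBasis hE1).ext fun k => ?_)⟩
  rw [Matrix.toLin'_apply', Matrix.toLin'_apply', he.toBasis_apply, hμ' k k.2,
    Matrix.mulVecLin_apply, Matrix.smul_mulVec, ← Matrix.mulVecLin_apply, hμ k k.2, smul_smul,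
    hprop k k.2]

end ShearProp

end Shear

end Flags

theorem statement_10_general (d : ℕ) (E1 E2 : ℕ → Submodule ℂ (Fin d → ℂ))
    (hE1 : IsCompleteFlag d E1) (hE2 : IsCompleteFlag d E2) (htr : TransverseFlags d E1 E2)
    (w : ℕ × ℕ → ℂ) (hw : ∀ i, memA d i → w i ≠ 0) :
    (∃ c : Matrix (Fin d) (Fin d) ℂ, ShearProp d E1 E2 w c) ∧
    ∀ c c' : Matrix (Fin d) (Fin d) ℂ, ShearProp d E1 E2 w c → ShearProp d E1 E2 w c' →
      ∃ γ : ℂ, γ ≠ 0 ∧ c' = γ • c :=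
  ⟨exists_shearProp hE1 hE2 htr hw, fun _ _ hc hc' => hc.unique hE1 hE2 htr hc'⟩

theorem statement_10 (d : ℕ) (hd : 2 ≤ d) (E1 E2 : ℕ → Submodule ℂ (Fin d → ℂ))
    (hE1 : IsCompleteFlag d E1) (hE2 : IsCompleteFlag d E2) (htr : TransverseFlags d E1 E2)
    (w : ℕ × ℕ → ℂ) (hw : ∀ i, memA d i → w i ≠ 0) :
    (∃ c : Matrix (Fin d) (Fin d) ℂ, ShearProp d E1 E2 w c) ∧
    ∀ c c' : Matrix (Fin d) (Fin d) ℂ, ShearProp d E1 E2 w c → ShearProp d E1 E2 w c' →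
      ∃ γ : ℂ, γ ≠ 0 ∧ c' = γ • c :=
  statement_10_general d E1 E2 hE1 hE2 htr w hw
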